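/- arXiv:math-ph/0211015 — 2 statements merged into one kernel-verified Lean document; each statement's English description precedes it below -/
import Mathlib

section
/- Fix an integer ν ≥ 1, a bounded potential V : ℤ^ν → ℝ, and let H = H₀ + V. Then for every φ ∈ ℓ²(ℤ^ν), Δ((1 + (4ν)⁻¹V)φ, U(1 − (4ν)⁻¹V)φ; V) ≥ 2⟨φ, (H₀ − 2ν + (4ν)⁻¹V²)φ⟩, where (1 ± (4ν)⁻¹V)φ denotes the pointwise product n ↦ (1 ± (4ν)⁻¹V(n))φ(n) and V² is multiplication by V(n)². -/
/-!
Write `a = (4ν)⁻¹`, `T = H₀ - 2ν` and `ψ± = φ ± aVφ`. Conjugation by `U` turns `H₀` into `-H₀`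
and commutes with `V`, so `Δ = ⟨ψ₊, (T + V)ψ₊⟩ + ⟨ψ₋, (T - V)ψ₋⟩`. Expanding, this is
`2⟨φ, Tφ⟩ + 2a²⟨Vφ, T Vφ⟩ + 4a‖Vφ‖²`, and `‖H₀‖ ≤ 2ν` gives `⟨Vφ, T Vφ⟩ ≥ -4ν‖Vφ‖²`,
so that `2a²⟨Vφ, T Vφ⟩ ≥ -2a‖Vφ‖²`; what remains is `2⟨φ, Tφ⟩ + 2a‖Vφ‖²`.
-/

noncomputable section

open scoped ComplexConjugate

namespace DHKS

/-- The Hilbert space ℓ²(α; ℂ). -/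
abbrev L2 (α : Type*) := lp (fun _ : α => ℂ) 2

variable {α β : Type*}

lemma memℓp_two_iff (f : α → ℂ) :
    Memℓp f 2 ↔ Summable (fun n => ‖f n‖ ^ (2 : ℝ)) := by
  rw [memℓp_gen_iff (by norm_num)]
  norm_num

lemma sum_sq_le (u : L2 α) (s : Finset α) :
    ∑ n ∈ s, ‖(u : α → ℂ) n‖ ^ (2:ℝ) ≤ ‖u‖ ^ (2:ℝ) := by
  simpa using lp.sum_rpow_le_norm_rpow (p := 2) (by norm_num) u s

lemma norm_le_of_sum_sq (u : L2 α) {C : ℝ} (hC : 0 ≤ C)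
    (h : ∀ s : Finset α, ∑ n ∈ s, ‖(u : α → ℂ) n‖ ^ (2:ℝ) ≤ C ^ (2:ℝ)) : ‖u‖ ≤ C := by
  refine lp.norm_le_of_forall_sum_le (p := 2) (by norm_num) hC ?_
  simpa using h

/-- Composition with an injective map, as a continuous linear map on ℓ². -/
def compOp (σ : α → β) (hσ : Function.Injective σ) : L2 β →L[ℂ] L2 α :=
  LinearMap.mkContinuous
    { toFun := fun u => ⟨fun n => (u : β → ℂ) (σ n), by
        apply (memℓp_two_iff _).2
        exact ((memℓp_two_iff _).1 (lp.memℓp u)).comp_injective hσ⟩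
      map_add' := by
        intro u v; apply lp.ext; funext n
        simp only [lp.coeFn_add, Pi.add_apply]
      map_smul' := by
        intro c u; apply lp.ext; funext n
        simp only [lp.coeFn_smul, Pi.smul_apply, RingHom.id_apply] }
    1 (by
      intro u
      rw [one_mul]
      refine norm_le_of_sum_sq _ (norm_nonneg u) (fun s => ?_)
      classical
      calc ∑ n ∈ s, ‖(u : β → ℂ) (σ n)‖ ^ (2:ℝ)
          = ∑ m ∈ s.image σ, ‖(u : β → ℂ) m‖ ^ (2:ℝ) := by
            rw [Finset.sum_image (fun a _ b _ h => hσ h)]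
        _ ≤ ‖u‖ ^ (2:ℝ) := sum_sq_le u _)

@[simp] lemma compOp_apply (σ : α → β) (hσ : Function.Injective σ) (u : L2 β) (n : α) :
    (compOp σ hσ u : α → ℂ) n = (u : β → ℂ) (σ n) := rfl

/-- Multiplication by a bounded real-valued function, as a continuous linear map on ℓ². -/
def mulOp (V : α → ℝ) (C : ℝ) (hC : ∀ n, |V n| ≤ C) : L2 α →L[ℂ] L2 α :=
  LinearMap.mkContinuous
    { toFun := fun u => ⟨fun n => (V n : ℂ) * (u : α → ℂ) n, by
        apply (memℓp_two_iff _).2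
        have h := (((memℓp_two_iff _).1 (lp.memℓp u)).mul_left ((max C 0) ^ (2:ℝ)))
        apply Summable.of_nonneg_of_le (fun n => by positivity) (fun n => ?_) h
        have h1 : ‖(V n : ℂ) * (u : α → ℂ) n‖ = |V n| * ‖(u : α → ℂ) n‖ := by
          rw [norm_mul, Complex.norm_real, Real.norm_eq_abs]
        rw [h1, Real.mul_rpow (abs_nonneg _) (norm_nonneg _)]
        have h3 : |V n| ^ (2:ℝ) ≤ (max C 0) ^ (2:ℝ) :=
          Real.rpow_le_rpow (abs_nonneg _) (le_max_of_le_left (hC n)) (by norm_num)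
        exact mul_le_mul_of_nonneg_right h3 (by positivity)⟩
      map_add' := by
        intro u v; apply lp.ext; funext n
        simp only [lp.coeFn_add, Pi.add_apply]
        ring
      map_smul' := by
        intro c u; apply lp.ext; funext n
        simp only [lp.coeFn_smul, Pi.smul_apply, RingHom.id_apply, smul_eq_mul]
        ring }
    (max C 0) (by
      intro u
      refine norm_le_of_sum_sq _ (by positivity) (fun s => ?_)
      have key : ∀ n ∈ s, ‖(V n : ℂ) * (u : α → ℂ) n‖ ^ (2:ℝ)
          ≤ (max C 0) ^ (2:ℝ) * ‖(u : α → ℂ) n‖ ^ (2:ℝ) := by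
        intro n _
        have h1 : ‖(V n : ℂ) * (u : α → ℂ) n‖ = |V n| * ‖(u : α → ℂ) n‖ := by
          rw [norm_mul, Complex.norm_real, Real.norm_eq_abs]
        rw [h1, Real.mul_rpow (abs_nonneg _) (norm_nonneg _)]
        have h3 : |V n| ^ (2:ℝ) ≤ (max C 0) ^ (2:ℝ) :=
          Real.rpow_le_rpow (abs_nonneg _) (le_max_of_le_left (hC n)) (by norm_num)
        exact mul_le_mul_of_nonneg_right h3 (by positivity)
      calc ∑ n ∈ s, ‖(V n : ℂ) * (u : α → ℂ) n‖ ^ (2:ℝ)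
          ≤ ∑ n ∈ s, (max C 0) ^ (2:ℝ) * ‖(u : α → ℂ) n‖ ^ (2:ℝ) := Finset.sum_le_sum key
        _ = (max C 0) ^ (2:ℝ) * ∑ n ∈ s, ‖(u : α → ℂ) n‖ ^ (2:ℝ) := by rw [Finset.mul_sum]
        _ ≤ (max C 0) ^ (2:ℝ) * ‖u‖ ^ (2:ℝ) :=
            mul_le_mul_of_nonneg_left (sum_sq_le u _) (by positivity)
        _ = (max C 0 * ‖u‖) ^ (2:ℝ) :=
            (Real.mul_rpow (le_max_right _ _) (norm_nonneg _)).symm)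

@[simp] lemma mulOp_apply (V : α → ℝ) (C : ℝ) (hC : ∀ n, |V n| ≤ C) (u : L2 α) (n : α) :
    (mulOp V C hC u : α → ℂ) n = (V n : ℂ) * (u : α → ℂ) n := rfl

/-- Extension by zero along an injective map, as a continuous linear map on ℓ². -/
def extOp (σ : α → β) (hσ : Function.Injective σ) : L2 α →L[ℂ] L2 β :=
  LinearMap.mkContinuous
    { toFun := fun u => ⟨Function.extend σ (u : α → ℂ) 0, by
        apply (memℓp_two_iff _).2
        have hpt : (fun b => ‖Function.extend σ (u : α → ℂ) 0 b‖ ^ (2:ℝ))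
            = Function.extend σ (fun a => ‖(u : α → ℂ) a‖ ^ (2:ℝ)) 0 := by
          funext b
          rcases em (∃ a, σ a = b) with ⟨a, rfl⟩ | hb
          · rw [hσ.extend_apply, hσ.extend_apply]
          · rw [Function.extend_apply' _ _ _ hb, Function.extend_apply' _ _ _ hb]
            simp [Real.zero_rpow (by norm_num : (2:ℝ) ≠ 0)]
        rw [hpt, summable_extend_zero hσ]
        exact (memℓp_two_iff _).1 (lp.memℓp u)⟩
      map_add' := by
        intro u v; apply lp.ext; funext b
        simp only [lp.coeFn_add, Pi.add_apply]
        rcases em (∃ a, σ a = b) with ⟨a, rfl⟩ | hb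
        · rw [hσ.extend_apply, hσ.extend_apply, hσ.extend_apply]
          simp [lp.coeFn_add]
        · rw [Function.extend_apply' _ _ _ hb, Function.extend_apply' _ _ _ hb,
            Function.extend_apply' _ _ _ hb]
          simp
      map_smul' := by
        intro c u; apply lp.ext; funext b
        simp only [lp.coeFn_smul, Pi.smul_apply, RingHom.id_apply, smul_eq_mul]
        rcases em (∃ a, σ a = b) with ⟨a, rfl⟩ | hb
        · rw [hσ.extend_apply, hσ.extend_apply]
          simp [lp.coeFn_smul]
        · rw [Function.extend_apply' _ _ _ hb, Function.extend_apply' _ _ _ hb]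
          simp }
    1 (by
      intro u
      rw [one_mul]
      refine norm_le_of_sum_sq _ (norm_nonneg u) (fun s => ?_)
      have hpt : (fun b => ‖Function.extend σ (u : α → ℂ) 0 b‖ ^ (2:ℝ))
          = Function.extend σ (fun a => ‖(u : α → ℂ) a‖ ^ (2:ℝ)) 0 := by
        funext b
        rcases em (∃ a, σ a = b) with ⟨a, rfl⟩ | hb
        · rw [hσ.extend_apply, hσ.extend_apply]
        · rw [Function.extend_apply' _ _ _ hb, Function.extend_apply' _ _ _ hb]
          simp [Real.zero_rpow (by norm_num : (2:ℝ) ≠ 0)]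
      have hsumm : Summable (fun a => ‖(u : α → ℂ) a‖ ^ (2:ℝ)) :=
        (memℓp_two_iff _).1 (lp.memℓp u)
      calc ∑ b ∈ s, ‖Function.extend σ (u : α → ℂ) 0 b‖ ^ (2:ℝ)
          ≤ ∑' b, ‖Function.extend σ (u : α → ℂ) 0 b‖ ^ (2:ℝ) := by
            refine Summable.sum_le_tsum s (fun b _ => by positivity) ?_
            rw [hpt, summable_extend_zero hσ]; exact hsumm
        _ = ∑' a, ‖(u : α → ℂ) a‖ ^ (2:ℝ) := by
            rw [hpt, tsum_extend_zero hσ]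
        _ = ‖u‖ ^ (2:ℝ) := by
            simpa using (lp.norm_rpow_eq_tsum (p := 2) (by norm_num) u).symm)

lemma extOp_apply (σ : α → β) (hσ : Function.Injective σ) (u : L2 α) (b : β) :
    (extOp σ hσ u : β → ℂ) b = Function.extend σ (u : α → ℂ) 0 b := rfl

/-- The real quadratic form ⟨φ, A φ⟩ of an operator. -/
def quadForm (A : L2 α →L[ℂ] L2 α) (φ : L2 α) : ℝ :=
  (inner ℂ φ (A φ) : ℂ).re

/-- `E` is an eigenvalue of the bounded operator `A`. -/
def IsEigenvalue (A : L2 α →L[ℂ] L2 α) (E : ℝ) : Prop :=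
  ∃ u : L2 α, u ≠ 0 ∧ A u = (E : ℂ) • u

lemma abs_mul_sq_le {γ x Cb : ℝ} (h : |x| ≤ Cb) : |γ * x ^ 2| ≤ |γ| * Cb ^ 2 := by
  have h1 := abs_le.1 h
  rw [abs_mul, abs_of_nonneg (sq_nonneg x)]
  exact mul_le_mul_of_nonneg_left (sq_le_sq' (by linarith [h1.1]) h1.2) (abs_nonneg γ)

end DHKS

namespace DHKS

/-! ## The lattice ℤ^ν -/

/-- The lattice `ℤ^ν`. -/
abbrev Zlat (ν : ℕ) := Fin ν → ℤ

/-- The ℓ¹-norm `|n|₁ = |n₁| + ⋯ + |n_ν|` of a lattice point. -/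
def normOne {ν : ℕ} (n : Zlat ν) : ℕ := ∑ i, (n i).natAbs

/-- The `i`-th standard unit vector in `ℤ^ν`. -/
def unitVec (ν : ℕ) (i : Fin ν) : Zlat ν := fun k => if k = i then 1 else 0

/-- The free discrete Schrödinger operator `(H₀ u)(n) = ∑_{|j|₁ = 1} u(n+j)`
on `ℓ²(ℤ^ν)`, written as the sum over translations by `± eᵢ`. -/
def H0 (ν : ℕ) : L2 (Zlat ν) →L[ℂ] L2 (Zlat ν) :=
  ∑ i : Fin ν,
    (compOp (fun n => n + unitVec ν i) (add_left_injective _) +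
      compOp (fun n => n + (-unitVec ν i)) (add_left_injective _))

lemma H0_apply {ν : ℕ} (u : L2 (Zlat ν)) (n : Zlat ν) :
    (H0 ν u : Zlat ν → ℂ) n =
      ∑ i : Fin ν, ((u : Zlat ν → ℂ) (n + unitVec ν i) + (u : Zlat ν → ℂ) (n - unitVec ν i)) := by
  rw [H0, ContinuousLinearMap.sum_apply, lp.coeFn_sum, Finset.sum_apply]
  simp [ContinuousLinearMap.add_apply, lp.coeFn_add, Pi.add_apply, sub_eq_add_neg]

/-- The unitary `(U φ)(n) = (-1)^{|n|₁} φ(n)`. -/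
def Uop (ν : ℕ) : L2 (Zlat ν) →L[ℂ] L2 (Zlat ν) :=
  mulOp (fun n => (-1 : ℝ) ^ normOne n) 1 (fun n => by simp [abs_pow])

/-- The discrete Schrödinger operator `H = H₀ + V` on `ℓ²(ℤ^ν)`. -/
def schrodinger (ν : ℕ) (V : Zlat ν → ℝ) (C : ℝ) (hC : ∀ n, |V n| ≤ C) :
    L2 (Zlat ν) →L[ℂ] L2 (Zlat ν) :=
  H0 ν + mulOp V C hC

/-- The quantity `Δ(φ₊, φ₋; V) = ⟨φ₊, (H-2ν)φ₊⟩ + ⟨φ₋, (-H-2ν)φ₋⟩`. -/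
def Delta (ν : ℕ) (V : Zlat ν → ℝ) (C : ℝ) (hC : ∀ n, |V n| ≤ C)
    (φp φm : L2 (Zlat ν)) : ℝ :=
  quadForm (schrodinger ν V C hC - ((2 * (ν:ℝ) : ℝ) : ℂ) • 1) φp +
    quadForm (-schrodinger ν V C hC - ((2 * (ν:ℝ) : ℝ) : ℂ) • 1) φm

end DHKS

namespace DHKS

section QuadraticForm

variable {α : Type*}

lemma quadForm_add (A B : L2 α →L[ℂ] L2 α) (φ : L2 α) :
    quadForm (A + B) φ = quadForm A φ + quadForm B φ := by
  simp [quadForm]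

lemma quadForm_smul_ofReal (A : L2 α →L[ℂ] L2 α) (a : ℝ) (φ : L2 α) :
    quadForm A ((a : ℂ) • φ) = a ^ 2 * quadForm A φ := by
  simp only [quadForm, map_smul, inner_smul_left, inner_smul_right, Complex.conj_ofReal,
    ← mul_assoc, ← Complex.ofReal_mul, Complex.re_ofReal_mul]
  ring

lemma quadForm_sub_smul_one (A : L2 α →L[ℂ] L2 α) (c : ℝ) (φ : L2 α) :
    quadForm (A - (c : ℂ) • 1) φ = quadForm A φ - c * ‖φ‖ ^ 2 := by
  simp only [quadForm, sub_apply, smul_apply,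
    one_apply_eq_self, inner_sub_right, inner_smul_right, Complex.sub_re,
    Complex.re_ofReal_mul, inner_self_eq_norm_sq_to_K]
  norm_cast

lemma neg_norm_mul_sq_le_quadForm (A : L2 α →L[ℂ] L2 α) (φ : L2 α) :
    -(‖A‖ * ‖φ‖ ^ 2) ≤ quadForm A φ :=
  calc -(‖A‖ * ‖φ‖ ^ 2) ≤ -(‖φ‖ * ‖A φ‖) := by
        have := A.le_opNorm φ
        nlinarith [norm_nonneg φ]
    _ ≤ -‖(inner ℂ φ (A φ) : ℂ)‖ := neg_le_neg (norm_inner_le_norm _ _)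
    _ ≤ quadForm A φ := neg_le_of_abs_le (Complex.abs_re_le_norm _)

lemma quadForm_add_add_quadForm_sub_sub (T M : L2 α →L[ℂ] L2 α) (u w : L2 α) :
    quadForm (T + M) (u + w) + quadForm (T - M) (u - w) =
      2 * quadForm T u + 2 * quadForm T w +
        2 * (inner ℂ u (M w) : ℂ).re + 2 * (inner ℂ w (M u) : ℂ).re := by
  simp only [quadForm, add_apply, sub_apply,
    map_add, map_sub, inner_add_left, inner_add_right, inner_sub_left, inner_sub_right,
    Complex.add_re, Complex.sub_re]
  ring

end QuadraticForm

section MultiplicationOperator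

variable {α : Type*} (V : α → ℝ) (C : ℝ) (hC : ∀ n, |V n| ≤ C)

lemma inner_mulOp_left (u v : L2 α) :
    (inner ℂ (mulOp V C hC u) v : ℂ) = inner ℂ u (mulOp V C hC v) := by
  rw [lp.inner_eq_tsum, lp.inner_eq_tsum]
  refine tsum_congr fun n => ?_
  simp only [RCLike.inner_apply, mulOp_apply, map_mul, Complex.conj_ofReal]
  ring

lemma re_inner_mulOp_mulOp (φ : L2 α) :
    (inner ℂ φ (mulOp V C hC (mulOp V C hC φ)) : ℂ).re = ‖mulOp V C hC φ‖ ^ 2 := by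
  rw [← inner_mulOp_left, inner_self_eq_norm_sq_to_K]
  norm_cast

lemma quadForm_mulOp_mul_sq (a C' : ℝ) (hC' : ∀ n, |a * V n ^ 2| ≤ C') (φ : L2 α) :
    quadForm (mulOp (fun n => a * V n ^ 2) C' hC') φ = a * ‖mulOp V C hC φ‖ ^ 2 := by
  have hsq : mulOp (fun n => a * V n ^ 2) C' hC' φ = (a : ℂ) • mulOp V C hC (mulOp V C hC φ) := by
    apply lp.ext; funext n
    simp only [lp.coeFn_smul, Pi.smul_apply, mulOp_apply, smul_eq_mul]
    push_cast
    ring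
  rw [quadForm, hsq, inner_smul_right, Complex.re_ofReal_mul, re_inner_mulOp_mulOp]

lemma mulOp_mulOp_comm (W : α → ℝ) (D : ℝ) (hD : ∀ n, |W n| ≤ D) (u : L2 α) :
    mulOp V C hC (mulOp W D hD u) = mulOp W D hD (mulOp V C hC u) := by
  apply lp.ext; funext n
  simp only [mulOp_apply]
  ring

lemma mulOp_mulOp_of_sq_eq_one (hV : ∀ n, V n ^ 2 = 1) (u : L2 α) :
    mulOp V C hC (mulOp V C hC u) = u := by
  apply lp.ext; funext n
  rw [mulOp_apply, mulOp_apply, ← mul_assoc, ← sq, ← Complex.ofReal_pow, hV,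
    Complex.ofReal_one, one_mul]

end MultiplicationOperator

lemma norm_compOp_le {α β : Type*} (σ : α → β) (hσ : Function.Injective σ) :
    ‖compOp σ hσ‖ ≤ 1 :=
  LinearMap.mkContinuous_norm_le _ zero_le_one _

section Lattice

variable {ν : ℕ}

lemma negOnePow_normOne (n : Zlat ν) : (normOne n : ℤ).negOnePow = (∑ i, n i).negOnePow := by
  rw [Int.negOnePow_eq_iff, normOne, Nat.cast_sum, ← Finset.sum_sub_distrib]
  exact Finset.even_sum _ fun i _ => by rw [Int.even_iff]; omega

lemma neg_one_pow_normOne (n : Zlat ν) :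
    (-1 : ℝ) ^ normOne n = ((∑ i, n i).negOnePow : ℝ) := by
  rw [← negOnePow_normOne, Int.cast_negOnePow_natCast]

lemma sum_unitVec (i : Fin ν) : ∑ k, unitVec ν i k = 1 := by
  simp [unitVec]

lemma neg_one_pow_normOne_add_unitVec (n : Zlat ν) (i : Fin ν) :
    (-1 : ℝ) ^ normOne (n + unitVec ν i) = -(-1 : ℝ) ^ normOne n := by
  simp only [neg_one_pow_normOne, Pi.add_apply, Finset.sum_add_distrib, sum_unitVec,
    Int.negOnePow_succ, Units.val_neg, Int.cast_neg]

lemma neg_one_pow_normOne_sub_unitVec (n : Zlat ν) (i : Fin ν) :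
    (-1 : ℝ) ^ normOne (n - unitVec ν i) = -(-1 : ℝ) ^ normOne n := by
  simp only [neg_one_pow_normOne, Pi.sub_apply, Finset.sum_sub_distrib, sum_unitVec,
    Int.negOnePow_sub, Int.negOnePow_one, mul_neg, mul_one, Units.val_neg, Int.cast_neg]

lemma Uop_apply (u : L2 (Zlat ν)) (n : Zlat ν) :
    (Uop ν u : Zlat ν → ℂ) n = ((-1 : ℝ) ^ normOne n : ℝ) * (u : Zlat ν → ℂ) n := rfl

lemma Uop_Uop (u : L2 (Zlat ν)) : Uop ν (Uop ν u) = u :=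
  mulOp_mulOp_of_sq_eq_one _ _ _ (fun n => by rw [← pow_mul, mul_comm, pow_mul]; simp) u

lemma inner_Uop_Uop (u v : L2 (Zlat ν)) : (inner ℂ (Uop ν u) (Uop ν v) : ℂ) = inner ℂ u v := by
  rw [Uop, inner_mulOp_left, ← Uop, Uop_Uop]

lemma Uop_mulOp (V : Zlat ν → ℝ) (C : ℝ) (hC : ∀ n, |V n| ≤ C) (u : L2 (Zlat ν)) :
    Uop ν (mulOp V C hC u) = mulOp V C hC (Uop ν u) :=
  mulOp_mulOp_comm _ _ _ _ _ _ u

lemma H0_Uop (u : L2 (Zlat ν)) : H0 ν (Uop ν u) = -Uop ν (H0 ν u) := by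
  apply lp.ext; funext n
  simp only [lp.coeFn_neg, Pi.neg_apply, H0_apply, Uop_apply, neg_one_pow_normOne_add_unitVec,
    neg_one_pow_normOne_sub_unitVec, Finset.mul_sum]
  rw [← Finset.sum_neg_distrib]
  refine Finset.sum_congr rfl fun i _ => ?_
  push_cast
  ring

lemma norm_H0_le (ν : ℕ) : ‖H0 ν‖ ≤ 2 * ν :=
  calc ‖H0 ν‖ ≤ ∑ _i : Fin ν, (1 + 1 : ℝ) :=
        (norm_sum_le _ _).trans <| Finset.sum_le_sum fun i _ =>
          (norm_add_le _ _).trans (add_le_add (norm_compOp_le _ _) (norm_compOp_le _ _))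
    _ = 2 * ν := by simp [mul_comm, one_add_one_eq_two]

lemma neg_four_mul_norm_sq_le_quadForm_H0 (ψ : L2 (Zlat ν)) :
    -(4 * (ν : ℝ)) * ‖ψ‖ ^ 2 ≤ quadForm (H0 ν - ((2 * (ν : ℝ) : ℝ) : ℂ) • 1) ψ := by
  rw [quadForm_sub_smul_one]
  have := neg_norm_mul_sq_le_quadForm (H0 ν) ψ
  nlinarith [norm_H0_le ν, sq_nonneg ‖ψ‖]

lemma quadForm_neg_schrodinger_Uop (V : Zlat ν → ℝ) (C : ℝ) (hC : ∀ n, |V n| ≤ C)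
    (ψ : L2 (Zlat ν)) :
    quadForm (-schrodinger ν V C hC - ((2 * (ν : ℝ) : ℝ) : ℂ) • 1) (Uop ν ψ) =
      quadForm (H0 ν - ((2 * (ν : ℝ) : ℝ) : ℂ) • 1 - mulOp V C hC) ψ := by
  have hconj : (-schrodinger ν V C hC - ((2 * (ν : ℝ) : ℝ) : ℂ) • 1) (Uop ν ψ) =
      Uop ν ((H0 ν - ((2 * (ν : ℝ) : ℝ) : ℂ) • 1 - mulOp V C hC) ψ) := by
    simp only [schrodinger, sub_apply, neg_apply, add_apply, smul_apply, one_apply_eq_self,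
      map_sub, map_smul, H0_Uop, Uop_mulOp]
    abel
  rw [quadForm, hconj, inner_Uop_Uop, quadForm]

end Lattice

/-- Theorem 2.2: for every `φ ∈ ℓ²(ℤ^ν)`,
`Δ((1+(4ν)⁻¹V)φ, U(1−(4ν)⁻¹V)φ; V) ≥ 2⟨φ, (H₀ − 2ν + (4ν)⁻¹V²)φ⟩`. -/
theorem statement1 (ν : ℕ) (V : Zlat ν → ℝ) (C : ℝ) (hC : ∀ n, |V n| ≤ C)
    (φ : L2 (Zlat ν)) :
    Delta ν V C hC
        ((1 + (((4 * (ν:ℝ))⁻¹ : ℝ) : ℂ) • mulOp V C hC) φ)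
        (Uop ν ((1 - (((4 * (ν:ℝ))⁻¹ : ℝ) : ℂ) • mulOp V C hC) φ)) ≥
      2 * quadForm
        (H0 ν - ((2 * (ν:ℝ) : ℝ) : ℂ) • 1 +
          mulOp (fun n => (4 * (ν:ℝ))⁻¹ * V n ^ 2) ((4 * (ν:ℝ))⁻¹ * C ^ 2)
            (fun n => by
              have h := abs_mul_sq_le (γ := (4 * (ν:ℝ))⁻¹) (hC n)
              rw [abs_of_nonneg (by positivity : (0:ℝ) ≤ (4 * (ν:ℝ))⁻¹)] at h
              simpa using h)) φ := by
  set a : ℝ := (4 * (ν : ℝ))⁻¹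
  set M := mulOp V C hC
  set T := H0 ν - ((2 * (ν : ℝ) : ℝ) : ℂ) • 1
  have hΔ : Delta ν V C hC ((1 + (a : ℂ) • M) φ) (Uop ν ((1 - (a : ℂ) • M) φ)) =
      quadForm (T + M) (φ + (a : ℂ) • M φ) + quadForm (T - M) (φ - (a : ℂ) • M φ) := by
    rw [Delta, quadForm_neg_schrodinger_Uop, schrodinger, add_sub_right_comm]
    rfl
  have hcross : (inner ℂ ((a : ℂ) • M φ) (M φ) : ℂ).re = a * ‖M φ‖ ^ 2 := by
    rw [inner_smul_left, Complex.conj_ofReal, Complex.re_ofReal_mul, inner_self_eq_norm_sq_to_K]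
    norm_cast
  have ha : a ^ 2 * (4 * ν) = a :=
    calc a ^ 2 * (4 * ν) = a * a⁻¹ * a := by simp only [a, inv_inv]; ring
      _ = a := mul_inv_mul_cancel a
  have hTw : -(a * ‖M φ‖ ^ 2) ≤ a ^ 2 * quadForm T (M φ) :=
    calc -(a * ‖M φ‖ ^ 2) = a ^ 2 * (-(4 * ν) * ‖M φ‖ ^ 2) := by linear_combination ‖M φ‖ ^ 2 * ha
      _ ≤ a ^ 2 * quadForm T (M φ) :=
        mul_le_mul_of_nonneg_left (neg_four_mul_norm_sq_le_quadForm_H0 _) (sq_nonneg a)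
  rw [ge_iff_le, hΔ, quadForm_add_add_quadForm_sub_sub, quadForm_add, quadForm_smul_ofReal,
    quadForm_mulOp_mul_sq V C hC, map_smul, inner_smul_right, Complex.re_ofReal_mul,
    re_inner_mulOp_mulOp, hcross]
  linarith

end DHKS
end
end

section
/- Let β ∈ [−1, 1] and define V : ℤ⁺ → ℝ by V(n) = β(−1)ⁿ/n. Then the operator J₀ + V has no eigenvalue E ∈ ℝ with |E| ≥ 2; in particular, J₀ + V has no bound states. -/
noncomputable section

open scoped ComplexConjugate

namespace DHKS

/-! ## Half-line operators on ℓ²(ℤ⁺), with ℤ⁺ = {1, 2, 3, …} realized as `ℕ+` -/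

lemma pnat_succ_injective : Function.Injective (fun n : ℕ+ => n + 1) := by
  intro a b h
  have : (a : ℕ) + 1 = (b : ℕ) + 1 := by exact_mod_cast congrArg (fun x : ℕ+ => (x : ℕ)) h
  exact PNat.coe_injective (Nat.succ_injective this)

/-- The shift `(S u)(n) = u(n+1)` on `ℓ²(ℤ⁺)`. -/
def shiftUp : L2 ℕ+ →L[ℂ] L2 ℕ+ := compOp (fun n => n + 1) pnat_succ_injective

/-- The shift `(D u)(n) = u(n-1)` for `n ≥ 2`, `(D u)(1) = 0` (the convention `u(0) = 0`). -/
def shiftDown : L2 ℕ+ →L[ℂ] L2 ℕ+ := extOp (fun n => n + 1) pnat_succ_injective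

@[simp] lemma shiftUp_apply (u : L2 ℕ+) (n : ℕ+) :
    (shiftUp u : ℕ+ → ℂ) n = (u : ℕ+ → ℂ) (n + 1) := rfl

@[simp] lemma shiftDown_apply_succ (u : L2 ℕ+) (m : ℕ+) :
    (shiftDown u : ℕ+ → ℂ) (m + 1) = (u : ℕ+ → ℂ) m := by
  exact pnat_succ_injective.extend_apply _ _ m

@[simp] lemma shiftDown_apply_one (u : L2 ℕ+) : (shiftDown u : ℕ+ → ℂ) 1 = 0 := by
  have h : ¬∃ m : ℕ+, m + 1 = 1 := by
    rintro ⟨m, hm⟩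
    exact (PNat.lt_add_left 1 m).ne' hm
  exact Function.extend_apply' (u : ℕ+ → ℂ) (0 : ℕ+ → ℂ) (1 : ℕ+) h

/-- The Jacobi matrix `(J u)(n) = aₙ u(n+1) + bₙ u(n) + a_{n-1} u(n-1)` (convention `u(0) = 0`)
on `ℓ²(ℤ⁺)`, for bounded sequences `a`, `b`. -/
def jacobiOp (a b : ℕ+ → ℝ) (Ca Cb : ℝ) (ha : ∀ n, |a n| ≤ Ca) (hb : ∀ n, |b n| ≤ Cb) :
    L2 ℕ+ →L[ℂ] L2 ℕ+ :=
  mulOp a Ca ha ∘L shiftUp + mulOp b Cb hb + shiftDown ∘L mulOp a Ca ha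

lemma jacobiOp_apply_succ (a b : ℕ+ → ℝ) (Ca Cb : ℝ) (ha : ∀ n, |a n| ≤ Ca)
    (hb : ∀ n, |b n| ≤ Cb) (u : L2 ℕ+) (m : ℕ+) :
    (jacobiOp a b Ca Cb ha hb u : ℕ+ → ℂ) (m + 1) =
      (a (m+1) : ℂ) * (u : ℕ+ → ℂ) (m + 2) + (b (m+1) : ℂ) * (u : ℕ+ → ℂ) (m + 1)
        + (a m : ℂ) * (u : ℕ+ → ℂ) m := by
  have h2 : (m : ℕ+) + 2 = (m + 1) + 1 := by ring
  simp [jacobiOp, ContinuousLinearMap.add_apply, lp.coeFn_add, Pi.add_apply, h2]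

lemma jacobiOp_apply_one (a b : ℕ+ → ℝ) (Ca Cb : ℝ) (ha : ∀ n, |a n| ≤ Ca)
    (hb : ∀ n, |b n| ≤ Cb) (u : L2 ℕ+) :
    (jacobiOp a b Ca Cb ha hb u : ℕ+ → ℂ) 1 =
      (a 1 : ℂ) * (u : ℕ+ → ℂ) 2 + (b 1 : ℂ) * (u : ℕ+ → ℂ) 1 := by
  have h2 : (2 : ℕ+) = 1 + 1 := rfl
  simp [jacobiOp, ContinuousLinearMap.add_apply, lp.coeFn_add, Pi.add_apply, h2]

/-- The free half-line discrete Schrödinger operator `J₀`:  `(J₀ u)(n) = u(n+1) + u(n-1)`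
with the convention `u(0) = 0`. -/
def J0 : L2 ℕ+ →L[ℂ] L2 ℕ+ := shiftUp + shiftDown

/-- The unitary `(U φ)(n) = (-1)^n φ(n)` on `ℓ²(ℤ⁺)`. -/
def UopHalf : L2 ℕ+ →L[ℂ] L2 ℕ+ :=
  mulOp (fun n => (-1 : ℝ) ^ (n : ℕ)) 1 (fun n => by simp [abs_pow])

end DHKS

namespace DHKS

/-- The potential `V(n) = β (-1)ⁿ / n`. -/
def altPot (β : ℝ) : ℕ+ → ℝ := fun n => β * (-1) ^ (n : ℕ) / (n : ℝ)

lemma altPot_bound (β : ℝ) (hβ : |β| ≤ 1) : ∀ n, |altPot β n| ≤ 1 := by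
  intro n
  unfold altPot
  rw [abs_div, abs_mul, abs_pow, abs_neg, abs_one, one_pow, mul_one]
  rw [div_le_one (by exact_mod_cast n.pos)]
  calc |β| ≤ 1 := hβ
    _ ≤ |(n : ℝ)| := by
        rw [abs_of_nonneg (by positivity)]
        exact_mod_cast n.one_le
  

/-! Write an eigenfunction with `u(0) = 0` as a sequence `w` on `ℕ`; its real and imaginary parts
solve the same real recurrence and tend to `0`. For `E ≥ 2` compare `w` with the Dirichlet
solution `g` at the band edge `E = 2`: the Wronskian of `w` and `g` grows by `(E - 2) g w` at each
step, so `w ≥ w(1) g` whenever `w(1) ≥ 0`. For `|β| ≤ 1` the alternating potential keeps `g`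
nondecreasing, hence `g ≥ 1`, and decay of `w` forces `w(1) = 0`, hence `w = 0`. The case
`E ≤ -2` reduces to `E ≥ 2` through `w(n) ↦ (-1)ⁿ w(n)`, which turns `(β, E)` into `(-β, -E)`. -/

open Filter Topology

section EigenEquation

variable {R : Type*} [CommRing R]

/-- `w` is indexed from `0`, so that `w 0` is the boundary value `u(0)` and `V(n)` multiplies
`w n`. -/
def SolvesEigenEq (V : ℕ+ → R) (E : R) (w : ℕ → R) : Prop :=
  ∀ n : ℕ, w (n + 2) + w n + V n.succPNat * w (n + 1) = E * w (n + 1)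

def wronskian (w g : ℕ → R) (n : ℕ) : R := w (n + 1) * g n - w n * g (n + 1)

def dirichletSol (V : ℕ+ → R) (E : R) : ℕ → R
  | 0 => 0
  | 1 => 1
  | n + 2 => (E - V n.succPNat) * dirichletSol V E (n + 1) - dirichletSol V E n

variable {V : ℕ+ → R} {E E' : R} {w g : ℕ → R}

lemma solvesEigenEq_dirichletSol (V : ℕ+ → R) (E : R) :
    SolvesEigenEq V E (dirichletSol V E) := fun n => by
  rw [dirichletSol]; ring

lemma SolvesEigenEq.neg (hw : SolvesEigenEq V E w) : SolvesEigenEq V E (-w) := fun n => by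
  simp only [Pi.neg_apply]; linear_combination -hw n

lemma SolvesEigenEq.alternating (hw : SolvesEigenEq V E w) :
    SolvesEigenEq (-V) (-E) (fun n => (-1) ^ n * w n) := fun n => by
  simp only [Pi.neg_apply]; linear_combination (-1) ^ n * hw n

lemma SolvesEigenEq.eq_zero (hw : SolvesEigenEq V E w) (h0 : w 0 = 0) (h1 : w 1 = 0) :
    w = 0 := by
  suffices h : ∀ n, w n = 0 ∧ w (n + 1) = 0 from funext fun n => (h n).1
  intro n
  induction n with
  | zero => exact ⟨h0, h1⟩
  | succ n ih => exact ⟨ih.2, by linear_combination hw n - ih.1 + (E - V n.succPNat) * ih.2⟩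

lemma SolvesEigenEq.wronskian_succ (hw : SolvesEigenEq V E w) (hg : SolvesEigenEq V E' g)
    (n : ℕ) : wronskian w g (n + 1) = wronskian w g n + (E - E') * g (n + 1) * w (n + 1) := by
  unfold wronskian
  linear_combination g (n + 1) * hw n - w (n + 1) * hg n

end EigenEquation

section RealParts

variable {V : ℕ+ → ℝ} {E : ℝ} {w : ℕ → ℂ}

lemma SolvesEigenEq.re (hw : SolvesEigenEq (fun n => (V n : ℂ)) E w) :
    SolvesEigenEq V E (fun n => (w n).re) :=
  fun n => by simpa using congrArg Complex.re (hw n)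

lemma SolvesEigenEq.im (hw : SolvesEigenEq (fun n => (V n : ℂ)) E w) :
    SolvesEigenEq V E (fun n => (w n).im) :=
  fun n => by simpa using congrArg Complex.im (hw n)

end RealParts

lemma SolvesEigenEq.mul_dirichletSol_le {V : ℕ+ → ℝ} {E E' : ℝ} {w : ℕ → ℝ}
    (hw : SolvesEigenEq V E w) (hw0 : w 0 = 0) (hw1 : 0 ≤ w 1) (hE : E' ≤ E)
    (hg : ∀ n, 0 < dirichletSol V E' (n + 1)) (n : ℕ) :
    w 1 * dirichletSol V E' (n + 1) ≤ w (n + 1) := by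
  set g := dirichletSol V E'
  suffices h : ∀ n, 0 ≤ wronskian w g n ∧ w 1 * g (n + 1) ≤ w (n + 1) from (h n).2
  intro n
  induction n with
  | zero => simp [wronskian, g, dirichletSol, hw0]
  | succ n ih =>
    obtain ⟨hW, hle⟩ := ih
    have hwpos : 0 ≤ w (n + 1) := (mul_nonneg hw1 (hg n).le).trans hle
    have hW' : 0 ≤ wronskian w g (n + 1) := by
      rw [hw.wronskian_succ (solvesEigenEq_dirichletSol V E') n]
      exact add_nonneg hW (mul_nonneg (mul_nonneg (sub_nonneg.2 hE) (hg n).le) hwpos)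
    refine ⟨hW', le_of_mul_le_mul_right ?_ (hg n)⟩
    calc w 1 * g (n + 2) * g (n + 1) = w 1 * g (n + 1) * g (n + 2) := by ring
      _ ≤ w (n + 1) * g (n + 2) := mul_le_mul_of_nonneg_right hle (hg (n + 1)).le
      _ ≤ w (n + 2) * g (n + 1) := by unfold wronskian at hW'; linarith

lemma altPot_succPNat (β : ℝ) (n : ℕ) :
    altPot β n.succPNat = β * (-1) ^ (n + 1) / (n + 1) := by
  simp [altPot]

lemma altPot_neg (β : ℝ) : altPot (-β) = -altPot β := by
  ext n; simp [altPot, neg_mul, neg_div]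

/-- When the potential is about to push `g` down (`V(n+2) = b/(n+2) > 0`), the previous step
`V(n+1) = -b/(n+1)` has already raised its slope by more, precisely because `b ≤ 1`. -/
lemma one_le_dirichletSol_altPot {β : ℝ} (hβ : |β| ≤ 1) (n : ℕ) :
    1 ≤ dirichletSol (altPot β) 2 (n + 1) := by
  set g := dirichletSol (altPot β) 2
  suffices h : ∀ n, 1 ≤ g (n + 1) ∧ g n ≤ g (n + 1) ∧ g (n + 1) ≤ g (n + 2) from (h n).1
  intro n
  induction n with
  | zero =>
    have hV : altPot β (Nat.succPNat 0) = -β := by simp [altPot]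
    refine ⟨le_rfl, zero_le_one, ?_⟩
    show 1 ≤ (2 - altPot β (Nat.succPNat 0)) * 1 - 0
    linarith [(abs_le.1 hβ).1]
  | succ n ih =>
    obtain ⟨hx, hd0, hd1⟩ := ih
    refine ⟨hx.trans hd1, hd1, ?_⟩
    have hy : g (n + 2) = (2 - altPot β n.succPNat) * g (n + 1) - g n := rfl
    have hz : g (n + 3) = (2 - altPot β (n + 1).succPNat) * g (n + 2) - g (n + 1) := rfl
    set b := β * (-1) ^ n
    have hb : |b| ≤ 1 := by simpa [b, abs_mul, abs_pow] using hβ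
    rw [altPot_succPNat, show β * (-1) ^ (n + 1) = -b by ring] at hy
    rw [altPot_succPNat, show β * (-1) ^ (n + 1 + 1) = b by ring] at hz
    push_cast at hz
    show g (n + 2) ≤ g (n + 3)
    rcases le_or_gt b 0 with hb0 | hb0
    · have : b / (n + 1 + 1) ≤ 0 := div_nonpos_of_nonpos_of_nonneg hb0 (by positivity)
      nlinarith
    · have hb1 : b ≤ 1 := (abs_le.1 hb).2
      have hslope : b * g (n + 1) ≤ (n + 1) * (g (n + 2) - g (n + 1)) := by
        rw [hy]; field_simp; nlinarith
      have hpush : b * g (n + 2) ≤ (n + 1 + 1) * (g (n + 2) - g (n + 1)) := by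
        nlinarith [mul_nonneg (by linarith : (0 : ℝ) ≤ n + 1 + 1 - b) (sub_nonneg.2 hslope),
          mul_nonneg (mul_nonneg hb0.le (by linarith : (0 : ℝ) ≤ g (n + 1)))
            (by linarith : (0 : ℝ) ≤ 1 - b)]
      have : b / (n + 1 + 1) * g (n + 2) ≤ g (n + 2) - g (n + 1) := by
        rw [div_mul_eq_mul_div, div_le_iff₀ (by positivity)]; linarith
      rw [hz]; linarith

section AltPot

variable {β E : ℝ} {w : ℕ → ℝ}

lemma SolvesEigenEq.apply_one_nonpos_of_tendsto (hβ : |β| ≤ 1)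
    (hw : SolvesEigenEq (altPot β) E w) (hw0 : w 0 = 0) (hE : 2 ≤ E)
    (hlim : Tendsto w atTop (𝓝 0)) : w 1 ≤ 0 := by
  by_contra! hw1
  have hle (n : ℕ) : w 1 ≤ w (n + 1) :=
    (le_mul_of_one_le_right hw1.le (one_le_dirichletSol_altPot hβ n)).trans
      (hw.mul_dirichletSol_le hw0 hw1.le hE
        (fun n => zero_lt_one.trans_le (one_le_dirichletSol_altPot hβ n)) n)
  exact hw1.not_ge (ge_of_tendsto ((tendsto_add_atTop_iff_nat 1).2 hlim) (.of_forall hle))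

lemma SolvesEigenEq.eq_zero_of_tendsto_of_two_le (hβ : |β| ≤ 1)
    (hw : SolvesEigenEq (altPot β) E w) (hw0 : w 0 = 0) (hE : 2 ≤ E)
    (hlim : Tendsto w atTop (𝓝 0)) : w = 0 := by
  have h₁ := hw.apply_one_nonpos_of_tendsto hβ hw0 hE hlim
  have h₂ := hw.neg.apply_one_nonpos_of_tendsto hβ (by simp [hw0]) hE
    (neg_zero (G := ℝ) ▸ hlim.neg)
  exact hw.eq_zero hw0 (le_antisymm h₁ (by simpa using h₂))

lemma SolvesEigenEq.eq_zero_of_tendsto (hβ : |β| ≤ 1)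
    (hw : SolvesEigenEq (altPot β) E w) (hw0 : w 0 = 0) (hE : 2 ≤ |E|)
    (hlim : Tendsto w atTop (𝓝 0)) : w = 0 := by
  rcases le_abs'.1 hE with hE | hE
  · have hw' := hw.alternating
    rw [← altPot_neg] at hw'
    have := hw'.eq_zero_of_tendsto_of_two_le (by rwa [abs_neg]) (by simp [hw0]) (by linarith)
      (by simpa [tendsto_zero_iff_norm_tendsto_zero] using hlim)
    funext n
    simpa using congrFun this n
  · exact hw.eq_zero_of_tendsto_of_two_le hβ hw0 hE hlim

end AltPot

def extendByZero {R : Type*} [Zero R] (u : ℕ+ → R) : ℕ → R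
  | 0 => 0
  | n + 1 => u n.succPNat

lemma extendByZero_coe {R : Type*} [Zero R] (u : ℕ+ → R) (n : ℕ+) :
    extendByZero u n = u n := by
  obtain ⟨m, rfl⟩ : ∃ m, n = m.succPNat := ⟨n.natPred, (PNat.succPNat_natPred n).symm⟩
  rfl

lemma tendsto_extendByZero (u : L2 ℕ+) : Tendsto (extendByZero ⇑u) atTop (𝓝 0) := by
  have hsq : Tendsto (fun n => ‖(u : ℕ+ → ℂ) n‖ ^ (2 : ℝ)) cofinite (𝓝 0) :=
    ((memℓp_two_iff _).1 (lp.memℓp u)).tendsto_cofinite_zero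
  have hu : Tendsto (u : ℕ+ → ℂ) cofinite (𝓝 0) := by
    rw [tendsto_zero_iff_norm_tendsto_zero]
    simpa [Real.rpow_two, Real.sqrt_sq_eq_abs] using hsq.sqrt
  rw [← tendsto_add_atTop_iff_nat 1, ← Nat.cofinite_eq_atTop]
  exact hu.comp Nat.succPNat_injective.tendsto_cofinite

lemma solvesEigenEq_extendByZero (V : ℕ+ → ℝ) (C : ℝ) (hC : ∀ n, |V n| ≤ C) (E : ℝ)
    (u : L2 ℕ+) (hu : (J0 + mulOp V C hC) u = (E : ℂ) • u) :
    SolvesEigenEq (fun n => (V n : ℂ)) E (extendByZero ⇑u) := by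
  have hpt (n : ℕ+) := congrArg (fun v : L2 ℕ+ => (v : ℕ+ → ℂ) n) hu
  simp only [J0, add_apply, lp.coeFn_add, Pi.add_apply, shiftUp_apply,
    mulOp_apply, lp.coeFn_smul, Pi.smul_apply, smul_eq_mul] at hpt
  rintro (_ | n)
  · change u (1 + 1) + 0 + V 1 * u 1 = E * u 1
    simpa using hpt 1
  · have h := hpt (n.succPNat + 1)
    rw [shiftDown_apply_succ] at h
    exact h

/-- Proposition 5.9: for `β ∈ [-1,1]` and `V(n) = β(-1)ⁿ/n`, the operator
`J₀ + V` has no eigenvalue `E` with `|E| ≥ 2`. -/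
theorem statement18 (β : ℝ) (hβ1 : -1 ≤ β) (hβ2 : β ≤ 1) :
    ∀ E : ℝ, 2 ≤ |E| →
      ¬IsEigenvalue (J0 + mulOp (altPot β) 1 (altPot_bound β (abs_le.2 ⟨hβ1, hβ2⟩))) E := by
  rintro E hE ⟨u, hu0, hu⟩
  have hβ : |β| ≤ 1 := abs_le.2 ⟨hβ1, hβ2⟩
  have hw := solvesEigenEq_extendByZero _ _ _ E u hu
  have hlim := tendsto_extendByZero u
  have hre := hw.re.eq_zero_of_tendsto hβ (by simp [extendByZero]) hE
    ((Complex.continuous_re.tendsto 0).comp hlim)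
  have him := hw.im.eq_zero_of_tendsto hβ (by simp [extendByZero]) hE
    ((Complex.continuous_im.tendsto 0).comp hlim)
  refine hu0 (lp.ext (funext fun n => ?_))
  rw [← extendByZero_coe (u : ℕ+ → ℂ)]
  exact Complex.ext (congrFun hre n) (congrFun him n)

end DHKS
end
end
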